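/- Let G : ℂ² → ℝ be a nonnegative continuous function that is subharmonic along every complex line, and let Λ : ℂ² → ℂ² be an invertible linear map with G ∘ Λ = d·G for some d > 1. If G vanishes on a circle {(z₁, 0) : |z₁| = r} × {0} inside the line L = {z₂ = 0} (with r > 0), and z₁ ↦ G(z₁, 0) is subharmonic on ℂ, and Λ preserves L acting on it as z₁ ↦ λ₁ z₁ with |λ₁| > 1, then G vanishes identically on L. -/

import Mathlib

/-!
The zero set of `z ↦ G (z, 0)` contains the closed disc of radius `r`: by the maximum principle
for the sub-mean-value property, a maximum above the boundary values would sit at an interior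
point `z₀`, and the largest circle about `z₀` inside the disc touches the boundary, where the
function is smaller, so its mean would be strictly below the value at `z₀`. The invariance
`G (l₁ z, 0) = d G (z, 0)` makes the zero set stable under `z ↦ l₁ z`, and since `‖l₁‖ > 1` the
images of the disc under the iterates exhaust `ℂ`.
-/

open Metric Set Real

theorem circleAverage_lt_of_le_of_exists_lt {f : ℂ → ℝ} {c : ℂ} {R M : ℝ}
    (hf : ContinuousOn f (sphere c |R|)) (hle : ∀ z ∈ sphere c |R|, f z ≤ M)
    (hlt : ∃ z ∈ sphere c |R|, f z < M) :
    circleAverage f c R < M := by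
  obtain ⟨z, hz, hzM⟩ := hlt
  obtain ⟨θ, hθ, rfl⟩ : z ∈ circleMap c R '' Ioc 0 (2 * π) := by rwa [image_circleMap_Ioc]
  have hcont : Continuous fun t ↦ f (circleMap c R t) :=
    hf.comp_continuous (continuous_circleMap c R) (circleMap_mem_sphere' c R)
  have hint : ∫ t in 0..2 * π, f (circleMap c R t) < ∫ _ in 0..2 * π, M :=
    intervalIntegral.integral_lt_integral_of_continuousOn_of_le_of_exists_lt two_pi_pos
      hcont.continuousOn continuousOn_const (fun t _ ↦ hle _ (circleMap_mem_sphere' c R t))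
      ⟨θ, Ioc_subset_Icc_self hθ, hzM⟩
  rw [← circleAverage_const M c R, circleAverage_def, circleAverage_def, smul_eq_mul, smul_eq_mul]
  exact mul_lt_mul_of_pos_left hint (inv_pos.mpr two_pi_pos)

theorem norm_circleMap_arg (z : ℂ) {s : ℝ} (hs : 0 ≤ s) :
    ‖circleMap z s z.arg‖ = ‖z‖ + s := by
  have hz : circleMap z s z.arg = ((‖z‖ + s : ℝ) : ℂ) * Complex.exp (z.arg * Complex.I) := by
    rw [circleMap]
    push_cast
    linear_combination -Complex.norm_mul_exp_arg_mul_I z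
  rw [hz, norm_mul, Complex.norm_exp_ofReal_mul_I, mul_one, Complex.norm_real, Real.norm_eq_abs,
    abs_of_nonneg (by positivity)]

theorem exists_circleMap_mem_sphere {c z : ℂ} {r : ℝ} (hz : dist z c ≤ r) :
    ∃ θ, circleMap z (r - dist z c) θ ∈ sphere c r := by
  refine ⟨(z - c).arg, ?_⟩
  have h := norm_circleMap_arg (z - c) (sub_nonneg.mpr hz)
  have hshift : circleMap z (r - dist z c) (z - c).arg - c
      = circleMap (z - c) (r - dist z c) (z - c).arg := by
    simp only [circleMap]; ring
  rw [mem_sphere, dist_eq_norm, hshift, h, ← dist_eq_norm]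
  ring

theorem le_of_forall_le_circleAverage {f : ℂ → ℝ} {c : ℂ} {r M : ℝ}
    (hf : ContinuousOn f (closedBall c r))
    (hsub : ∀ z ∈ ball c r, ∀ s, 0 < s → closedBall z s ⊆ closedBall c r →
      f z ≤ circleAverage f z s)
    (hM : ∀ z ∈ sphere c r, f z ≤ M) :
    ∀ z ∈ closedBall c r, f z ≤ M := by
  by_contra! h
  obtain ⟨w, hw, hwM⟩ := h
  obtain ⟨z₀, hz₀, hmax⟩ := (isCompact_closedBall c r).exists_isMaxOn ⟨w, hw⟩ hf
  have hz₀M : M < f z₀ := hwM.trans_le (hmax hw)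
  have hz₀ball : z₀ ∈ ball c r :=
    (mem_closedBall.mp hz₀).lt_of_ne fun h ↦ (hM z₀ (mem_sphere.mpr h)).not_gt hz₀M
  set s := r - dist z₀ c
  have hs : 0 < s := sub_pos.mpr hz₀ball
  have hdisc : closedBall z₀ s ⊆ closedBall c r := closedBall_subset_closedBall' (by simp [s])
  have hcircle : sphere z₀ |s| ⊆ closedBall c r := by
    rw [abs_of_pos hs]
    exact sphere_subset_closedBall.trans hdisc
  obtain ⟨θ, hθ⟩ := exists_circleMap_mem_sphere (mem_closedBall.mp hz₀)
  have hlt : circleAverage f z₀ s < f z₀ :=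
    circleAverage_lt_of_le_of_exists_lt (hf.mono hcircle) (fun z hz ↦ hmax (hcircle hz))
      ⟨_, circleMap_mem_sphere' z₀ s θ, (hM _ hθ).trans_lt hz₀M⟩
  exact hlt.not_ge (hsub z₀ hz₀ball s hs hdisc)

theorem eq_univ_of_mapsTo_smul_of_closedBall_subset {𝕜 E : Type*} [NormedField 𝕜]
    [NormedAddCommGroup E] [NormedSpace 𝕜 E] {l : 𝕜} {r : ℝ} {s : Set E} (hl : 1 < ‖l‖)
    (hr : 0 < r) (hs : MapsTo (l • ·) s s) (hball : closedBall 0 r ⊆ s) : s = univ := by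
  refine eq_univ_of_forall fun z ↦ ?_
  obtain ⟨n, hn⟩ := pow_unbounded_of_one_lt (‖z‖ / r) hl
  have hln : l ^ n ≠ 0 := pow_ne_zero n (norm_pos_iff.mp (one_pos.trans hl))
  have hw : (l ^ n)⁻¹ • z ∈ s := hball <| by
    rw [mem_closedBall_zero_iff, norm_smul, norm_inv, norm_pow, inv_mul_le_iff₀ (by positivity)]
    exact ((div_lt_iff₀ hr).mp hn).le
  simpa only [smul_iterate, smul_inv_smul₀ hln] using hs.iterate n hw

theorem stmt_16_general (G : ℂ × ℂ → ℝ) (l₁ : ℂ) (d r : ℝ)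
    (hG : Continuous G) (hGpos : ∀ z : ℂ × ℂ, 0 ≤ G z)
    (hsub : ∀ z : ℂ, ∀ s : ℝ, 0 < s →
      G (z, 0) ≤ (2 * Real.pi)⁻¹ * ∫ t in (0 : ℝ)..(2 * Real.pi),
        G (z + s * Complex.exp (t * Complex.I), 0))
    (hl : 1 < ‖l₁‖)
    (hinv : ∀ z : ℂ, G (l₁ * z, 0) = d * G (z, 0))
    (hr : 0 < r) (hcirc : ∀ z : ℂ, ‖z‖ = r → G (z, 0) = 0) :
    ∀ z : ℂ, G (z, 0) = 0 := by
  set g : ℂ → ℝ := fun z ↦ G (z, 0)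
  have hg : Continuous g := hG.comp (by fun_prop)
  -- `hsub z s hs` is `g z ≤ circleAverage g z s` with `circleAverage` and `circleMap` unfolded.
  have hdisc : closedBall 0 r ⊆ {z | g z = 0} := fun z hz ↦
    le_antisymm (le_of_forall_le_circleAverage hg.continuousOn (fun z _ s hs _ ↦ hsub z s hs)
      (fun w hw ↦ (hcirc w (mem_sphere_zero_iff_norm.mp hw)).le) z hz) (hGpos _)
  have hinvariant : MapsTo (l₁ • ·) {z | g z = 0} {z | g z = 0} := fun z hz ↦
    show G (l₁ * z, 0) = 0 by rw [hinv]; exact mul_eq_zero_of_right d hz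
  exact eq_univ_iff_forall.mp (eq_univ_of_mapsTo_smul_of_closedBall_subset hl hr hinvariant hdisc)

/-- If a nonnegative continuous function `G` on ℂ², subharmonic along the line
`L = {z₂ = 0}`, vanishes on a circle `{|z₁| = r}` in `L`, and satisfies
`G(λ₁z₁,0) = d·G(z₁,0)` with `|λ₁| > 1` and `d > 1`, then `G` vanishes identically
on `L`. -/
theorem stmt_16 (G : ℂ × ℂ → ℝ) (l₁ : ℂ) (d r : ℝ)
    (hG : Continuous G) (hGpos : ∀ z : ℂ × ℂ, 0 ≤ G z)
    (hsub : ∀ z : ℂ, ∀ s : ℝ, 0 < s →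
      G (z, 0) ≤ (2 * Real.pi)⁻¹ * ∫ t in (0 : ℝ)..(2 * Real.pi),
        G (z + s * Complex.exp (t * Complex.I), 0))
    (hl : 1 < ‖l₁‖) (hd : 1 < d)
    (hinv : ∀ z : ℂ, G (l₁ * z, 0) = d * G (z, 0))
    (hr : 0 < r) (hcirc : ∀ z : ℂ, ‖z‖ = r → G (z, 0) = 0) :
    ∀ z : ℂ, G (z, 0) = 0 :=
  stmt_16_general G l₁ d r hG hGpos hsub hl hinv hr hcirc
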